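/- arXiv:1301.5596 — 3 statements merged into one kernel-verified Lean document; each statement's English description precedes it below -/
import Mathlib

section
/- Let V be an n×n matrix over a field such that every square submatrix of V has nonzero determinant, and let UV = I. Then the linear code generated by any r rows of U, with parity check given by the corresponding n−r columns of V, has minimum distance n−r+1; i.e., every nonzero vector u in the row space of U's chosen r rows has Hamming weight at least n−r+1. -/
/-!
Since `U * V = 1`, every `u` in the span of the rows `U i`, `i ∈ R`, has `u ᵥ* V` vanishing on
the `n - r` columns outside `R`. If `u` had at most `n - r` nonzero entries, restricting `u` to
its support would give a nonzero vector in the left kernel of a square submatrix of `V` (rows: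
the support of `u`; columns: some of those outside `R`), which is impossible when every square
submatrix of `V` is nonsingular.
-/

open Finset Function Matrix

namespace Matrix

variable {ι κ K : Type*}

def IsSuperregular [CommRing K] (V : Matrix ι κ K) : Prop :=
  ∀ (m : ℕ) (f : Fin m → ι) (g : Fin m → κ), 0 < m → Injective f → Injective g →
    (V.submatrix f g).det ≠ 0

theorem vecMul_apply_eq_zero_of_mem_span_rows [CommSemiring K] [Fintype κ] [DecidableEq ι]
    {U : Matrix ι κ K} {V : Matrix κ ι K} (hUV : U * V = 1) {R : Set ι} {u : κ → K}
    (hu : u ∈ Submodule.span K (U '' R)) {j : ι} (hj : j ∉ R) : (u ᵥ* V) j = 0 := by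
  have hrows : U '' R ⊆ LinearMap.ker (LinearMap.proj j ∘ₗ V.vecMulLinear) := by
    rintro _ ⟨i, hi, rfl⟩
    change (U * V) i j = 0
    rw [hUV, one_apply_ne (ne_of_mem_of_not_mem hi hj)]
  exact Submodule.span_le.mpr hrows hu

theorem vecMul_submatrix_equiv_support [CommSemiring K] [Fintype ι] [DecidableEq K]
    {μ ν : Type*} [Fintype μ] (V : Matrix ι κ K) (w : ι → K) (e : μ ≃ {i // w i ≠ 0})
    (g : ν → κ) : (fun k => w (e k)) ᵥ* V.submatrix (fun k => e k) g = (w ᵥ* V) ∘ g := by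
  ext c
  change ∑ k, w (e k) * V (e k) (g c) = ∑ i, w i * V i (g c)
  rw [e.sum_comp (fun i => w i * V i (g c)),
    ← sum_subtype _ (fun _ => mem_filter_univ _) (fun i => w i * V i (g c)),
    sum_filter_of_ne (fun i _ h => left_ne_zero_of_mul h)]

theorem IsSuperregular.card_lt_hammingNorm [CommRing K] [NoZeroDivisors K] [Fintype ι]
    [DecidableEq K] {V : Matrix ι κ K} (hV : V.IsSuperregular) {w : ι → K} (hw : w ≠ 0)
    {T : Finset κ} (hT : ∀ j ∈ T, (w ᵥ* V) j = 0) : #T < hammingNorm w := by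
  by_contra! hle
  have hpos : 0 < hammingNorm w := hammingNorm_pos_iff.mpr hw
  let e : Fin (hammingNorm w) ≃ {i // w i ≠ 0} :=
    (Fintype.equivFinOfCardEq (Fintype.card_subtype _)).symm
  let g : Fin (hammingNorm w) → κ := fun k => T.equivFin.symm (Fin.castLE hle k)
  have hg : Injective g :=
    Subtype.val_injective.comp (T.equivFin.symm.injective.comp (Fin.castLE_injective hle))
  have hkernel : (fun k => w (e k)) ᵥ* V.submatrix (fun k => e k) g = 0 := by
    rw [vecMul_submatrix_equiv_support]
    ext k
    exact hT _ (T.equivFin.symm _).2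
  have hdet := hV _ _ g hpos (Subtype.val_injective.comp e.injective) hg
  exact (e ⟨0, hpos⟩).2 (congrFun (eq_zero_of_vecMul_eq_zero hdet hkernel) ⟨0, hpos⟩)

end Matrix

theorem unit_derived_code_mds {n r : ℕ} {K : Type*} [Field K] [DecidableEq K]
    (U V : Matrix (Fin n) (Fin n) K) (hUV : U * V = 1)
    (hcheb : ∀ (m : ℕ) (f g : Fin m → Fin n), 0 < m → Function.Injective f →
      Function.Injective g → (V.submatrix f g).det ≠ 0)
    (R : Finset (Fin n)) (hR : R.card = r)
    (u : Fin n → K) (hu : u ∈ Submodule.span K ((fun i => U i) '' (R : Set (Fin n))))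
    (hu0 : u ≠ 0) :
    n - r + 1 ≤ hammingNorm u := by
  have hcheck : ∀ j ∈ Rᶜ, (u ᵥ* V) j = 0 := fun j hj =>
    vecMul_apply_eq_zero_of_mem_span_rows hUV hu (by simpa using hj)
  have hlt := IsSuperregular.card_lt_hammingNorm hcheb hu0 hcheck
  rw [card_compl, hR, Fintype.card_fin] at hlt
  omega
end

section
/- (Chebotarëv) Let p be a prime and ω ∈ ℂ a primitive p-th root of unity. Then every square submatrix of the p×p matrix V with (i,j)-entry ω^{ij} (0 ≤ i,j ≤ p−1) has nonzero determinant. -/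
/-!
Write the minor as `D(ω)` with `D = det (X ^ (aᵢ bⱼ)) ∈ ℤ[X]`, and put `d = 0 + 1 + ⋯ + (m - 1)`.
The `j`-th Taylor coefficient of `D` at `1` is `∑ σ, sgn σ • C(S σ, j)` with
`S σ = ∑ i, a (σ i) * b i`. Since `j! C(S, j)` is a polynomial of degree `j` in `S`, these
coefficients are governed by the signed power sums `∑ σ, sgn σ • (S σ) ^ e`. By the multinomial
theorem such a sum is a combination of generalized Vandermonde determinants `det (aᵢ ^ kⱼ)` with
`∑ k = e`; these vanish unless the `kⱼ` are distinct, which forces `e ≥ d`, and for `e = d` only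
the permutations of `0, …, m - 1` survive. Hence `D = (X - 1) ^ d * Q` with
`(∏ i!) * Q(1) = V(a) V(b)`. If `D(ω) = 0`, then `Q(ω) = 0`, so the cyclotomic polynomial `Φ_p`
divides `Q` and `p = Φ_p(1)` divides `Q(1)`; but `p` divides neither Vandermonde determinant, the
`aᵢ` (resp. `bⱼ`) being distinct residues mod `p`.
-/

open Finset Polynomial Equiv

namespace Finset

theorem sum_range_card_le_sum (s : Finset ℕ) : ∑ i ∈ range #s, i ≤ ∑ i ∈ s, i := by
  induction s using Finset.induction_on_max with
  | empty => simp
  | insert a s ha ih =>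
    have has : a ∉ s := fun h => (ha a h).false
    have hcard : #s ≤ a := by simpa using card_le_card (fun x hx => mem_range.2 (ha x hx))
    rw [card_insert_of_notMem has, sum_range_succ, sum_insert has]
    omega

theorem eq_range_card_of_sum_le {s : Finset ℕ} (h : ∑ i ∈ s, i ≤ ∑ i ∈ range #s, i) :
    s = range #s := by
  induction s using Finset.induction_on_max with
  | empty => simp
  | insert a s ha ih =>
    have has : a ∉ s := fun h => (ha a h).false
    have hcard : #s ≤ a := by simpa using card_le_card (fun x hx => mem_range.2 (ha x hx))
    rw [card_insert_of_notMem has, sum_range_succ, sum_insert has] at h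
    have hs := sum_range_card_le_sum s
    rw [card_insert_of_notMem has, range_add_one, ih (by omega), card_range, show a = #s by omega]

end Finset

variable {m : ℕ}

theorem sum_range_le_sum_of_injective {k : Fin m → ℕ} (hk : Function.Injective k) :
    ∑ i ∈ range m, i ≤ ∑ i, k i := by
  classical
  simpa [sum_image fun i _ j _ h => hk h, card_image_of_injective _ hk] using
    sum_range_card_le_sum (univ.image k)

theorem exists_perm_of_injective_of_sum_le {k : Fin m → ℕ} (hk : Function.Injective k)
    (h : ∑ i, k i ≤ ∑ i ∈ range m, i) : ∃ τ : Perm (Fin m), ∀ i, k i = τ i := by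
  classical
  have himage : univ.image k = range m := by
    simpa [sum_image fun i _ j _ h => hk h, card_image_of_injective _ hk, h] using
      eq_range_card_of_sum_le (s := univ.image k)
  have hlt (i : Fin m) : k i < m := mem_range.1 (himage ▸ mem_image_of_mem k (mem_univ i))
  have hinj : Function.Injective fun i => (⟨k i, hlt i⟩ : Fin m) :=
    fun i j hij => hk (Fin.mk.inj hij)
  exact ⟨Equiv.ofBijective _ hinj.bijective_of_finite, fun i => rfl⟩

variable {R : Type*} [CommRing R]

namespace Matrix

theorem det_of_pow_eq_zero_of_not_injective (x : Fin m → R) {k : Fin m → ℕ}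
    (hk : ¬ Function.Injective k) : (of fun i j => x i ^ k j).det = 0 := by
  obtain ⟨i, j, hij, hne⟩ := Function.not_injective_iff.1 hk
  exact det_zero_of_column_eq hne fun r => by simp [hij]

theorem det_of_pow_perm (x : Fin m → R) (τ : Perm (Fin m)) :
    (of fun i j => x i ^ (τ j : ℕ)).det = Perm.sign τ • (vandermonde x).det := by
  rw [Units.smul_def, zsmul_eq_mul, ← det_permute']
  rfl

end Matrix

def signedPowerSum (x y : Fin m → R) (e : ℕ) : R :=
  ∑ σ : Perm (Fin m), Perm.sign σ • (∑ i, x (σ i) * y i) ^ e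

theorem signedPowerSum_eq_sum_piAntidiag (x y : Fin m → R) (e : ℕ) :
    signedPowerSum x y e = ∑ k ∈ piAntidiag univ e,
      Nat.multinomial univ k * (∏ i, y i ^ k i) * (Matrix.of fun i j => x i ^ k j).det := by
  simp_rw [signedPowerSum, sum_pow_eq_sum_piAntidiag, smul_sum, Matrix.det_apply, mul_sum]
  rw [sum_comm]
  refine sum_congr rfl fun k _ => sum_congr rfl fun σ _ => ?_
  simp only [Matrix.of_apply, mul_pow, prod_mul_distrib, Units.smul_def, zsmul_eq_mul]
  ring

theorem signedPowerSum_eq_zero_of_lt (x y : Fin m → R) {e : ℕ} (he : e < ∑ i ∈ range m, i) :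
    signedPowerSum x y e = 0 := by
  rw [signedPowerSum_eq_sum_piAntidiag]
  refine sum_eq_zero fun k hk => ?_
  have hk : ¬ Function.Injective k := fun hinj => by
    have := sum_range_le_sum_of_injective hinj
    rw [(mem_piAntidiag.1 hk).1] at this
    omega
  rw [Matrix.det_of_pow_eq_zero_of_not_injective x hk, mul_zero]

theorem signedPowerSum_sum_range (x y : Fin m → R) :
    signedPowerSum x y (∑ i ∈ range m, i) = Nat.multinomial univ (fun i : Fin m => (i : ℕ)) *
      (Matrix.vandermonde x).det * (Matrix.vandermonde y).det := by
  classical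
  set toExps : Perm (Fin m) → Fin m → ℕ := fun τ i => τ i
  have hexps : univ.image toExps ⊆ piAntidiag univ (∑ i ∈ range m, i) := by
    simp only [subset_iff, mem_image, mem_univ, true_and, mem_piAntidiag, forall_exists_index]
    rintro _ τ rfl
    simp [toExps, Equiv.sum_comp τ (fun i : Fin m => (i : ℕ)),
      Fin.sum_univ_eq_sum_range (fun i : ℕ => i) m]
  rw [signedPowerSum_eq_sum_piAntidiag, ← sum_subset hexps, sum_image]
  · have hmult (τ : Perm (Fin m)) : Nat.multinomial univ (toExps τ) =
        Nat.multinomial univ (fun i : Fin m => (i : ℕ)) := by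
      simp only [Nat.multinomial, toExps, Equiv.sum_comp τ (fun i : Fin m => (i : ℕ)),
        Equiv.prod_comp τ (fun i : Fin m => (i : ℕ).factorial)]
    simp only [hmult, toExps, Matrix.det_of_pow_perm]
    rw [← Matrix.det_transpose (Matrix.vandermonde y),
      Matrix.det_apply (Matrix.vandermonde y).transpose, mul_sum]
    refine sum_congr rfl fun τ _ => ?_
    simp only [Matrix.transpose_apply, Matrix.vandermonde_apply, Units.smul_def, zsmul_eq_mul]
    ring
  · intro τ _ σ _ h
    ext i
    exact congrFun h i
  · intro k hk hkimage
    have hinj : ¬ Function.Injective k := fun hinj => hkimage <| by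
      obtain ⟨τ, hτ⟩ := exists_perm_of_injective_of_sum_le hinj (mem_piAntidiag.1 hk).1.le
      exact mem_image.2 ⟨τ, mem_univ τ, funext fun i => (hτ i).symm⟩
    rw [Matrix.det_of_pow_eq_zero_of_not_injective x hinj, mul_zero]

theorem sum_sign_smul_eval_eq_coeff_mul_signedPowerSum (x y : Fin m → R) {P : R[X]}
    (hP : P.natDegree ≤ ∑ i ∈ range m, i) :
    ∑ σ : Perm (Fin m), Perm.sign σ • P.eval (∑ i, x (σ i) * y i) =
      P.coeff (∑ i ∈ range m, i) * signedPowerSum x y (∑ i ∈ range m, i) := by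
  simp_rw [eval_eq_sum_range' (Nat.lt_succ_of_le hP), smul_sum]
  rw [sum_comm, sum_range_succ, sum_eq_zero fun e he => ?_, zero_add]
  · simp only [signedPowerSum, mul_sum, mul_smul_comm]
  · simp only [← mul_smul_comm, ← mul_sum]
    rw [← signedPowerSum, signedPowerSum_eq_zero_of_lt x y (mem_range.1 he), mul_zero]

noncomputable def minorPoly (a b : Fin m → ℕ) : ℤ[X] :=
  (Matrix.of fun i j => (X : ℤ[X]) ^ (a i * b j)).det

theorem aeval_minorPoly {A : Type*} [CommRing A] (ω : A) (a b : Fin m → ℕ) :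
    aeval ω (minorPoly a b) = (Matrix.of fun i j => ω ^ (a i * b j)).det := by
  rw [minorPoly, AlgHom.map_det]
  congr 1
  ext i j
  simp

theorem coeff_taylor_minorPoly (a b : Fin m → ℕ) (j : ℕ) :
    (taylor 1 (minorPoly a b)).coeff j =
      ∑ σ : Perm (Fin m), Perm.sign σ • ((∑ i, a (σ i) * b i).choose j : ℤ) := by
  rw [minorPoly, Matrix.det_apply, map_sum, finsetSum_coeff]
  refine sum_congr rfl fun σ _ => ?_
  simp only [Matrix.of_apply, prod_pow_eq_pow_sum, Units.smul_def, map_zsmul, taylor_X_pow,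
    map_one, coeff_smul, coeff_X_add_one_pow]

theorem factorial_mul_coeff_taylor_minorPoly (a b : Fin m → ℕ) {j : ℕ}
    (hj : j ≤ ∑ i ∈ range m, i) :
    (j.factorial : ℤ) * (taylor 1 (minorPoly a b)).coeff j =
      (descPochhammer ℤ j).coeff (∑ i ∈ range m, i) *
        signedPowerSum (fun i => (a i : ℤ)) (fun i => (b i : ℤ)) (∑ i ∈ range m, i) := by
  rw [← sum_sign_smul_eval_eq_coeff_mul_signedPowerSum _ _
    ((descPochhammer_natDegree ℤ j).trans_le hj), coeff_taylor_minorPoly, mul_sum]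
  refine sum_congr rfl fun σ _ => ?_
  rw [mul_smul_comm, ← Nat.cast_mul, ← Nat.descFactorial_eq_factorial_mul_choose,
    ← descPochhammer_eval_eq_descFactorial]
  push_cast
  rfl

theorem coeff_taylor_minorPoly_of_lt (a b : Fin m → ℕ) {j : ℕ} (hj : j < ∑ i ∈ range m, i) :
    (taylor 1 (minorPoly a b)).coeff j = 0 := by
  have h := factorial_mul_coeff_taylor_minorPoly a b hj.le
  rw [coeff_eq_zero_of_natDegree_lt ((descPochhammer_natDegree ℤ j).trans_lt hj), zero_mul] at h
  exact (mul_eq_zero.1 h).resolve_left (by positivity)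

theorem prod_factorial_mul_coeff_taylor_minorPoly (a b : Fin m → ℕ) :
    (∏ i : Fin m, ((i : ℕ).factorial : ℤ)) *
        (taylor 1 (minorPoly a b)).coeff (∑ i ∈ range m, i) =
      (Matrix.vandermonde fun i => (a i : ℤ)).det *
        (Matrix.vandermonde fun i => (b i : ℤ)).det := by
  have h := factorial_mul_coeff_taylor_minorPoly a b le_rfl
  have hmonic := (monic_descPochhammer ℤ (∑ i ∈ range m, i)).coeff_natDegree
  rw [descPochhammer_natDegree] at hmonic
  rw [hmonic, one_mul, signedPowerSum_sum_range] at h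
  have hspec : (∏ i : Fin m, ((i : ℕ).factorial : ℤ)) *
      Nat.multinomial univ (fun i : Fin m => (i : ℕ)) = (∑ i ∈ range m, i).factorial := by
    rw [← Fin.sum_univ_eq_sum_range (fun i => i) m, ← Nat.multinomial_spec]
    push_cast
    rfl
  have hmult : (Nat.multinomial univ (fun i : Fin m => (i : ℕ)) : ℤ) ≠ 0 := by
    exact_mod_cast (Nat.multinomial_pos _ _).ne'
  exact mul_left_cancel₀ hmult <| by
    linear_combination h + (taylor 1 (minorPoly a b)).coeff (∑ i ∈ range m, i) * hspec

namespace IsPrimitiveRoot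

variable {K : Type*} [Field K] [CharZero K] {ω : K} {p : ℕ}

theorem prime_dvd_eval_one (hp : p.Prime) (hω : IsPrimitiveRoot ω p) {Q : ℤ[X]}
    (hQ : aeval ω Q = 0) : (p : ℤ) ∣ Q.eval 1 := by
  have := Fact.mk hp
  have hdvd : cyclotomic p ℤ ∣ Q := by
    rw [cyclotomic_eq_minpoly hω hp.pos]
    exact minpoly.isIntegrallyClosed_dvd (hω.isIntegral hp.pos) hQ
  simpa using eval_dvd (x := 1) hdvd

theorem prime_dvd_coeff_taylor_one (hp : p.Prime) (hω : IsPrimitiveRoot ω p) {P : ℤ[X]} {d : ℕ}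
    (hlt : ∀ j < d, (taylor 1 P).coeff j = 0) (hP : aeval ω P = 0) :
    (p : ℤ) ∣ (taylor 1 P).coeff d := by
  obtain ⟨G, hG⟩ := X_pow_dvd_iff.2 hlt
  have hPG : P = (X - 1) ^ d * taylor (-1) G :=
    calc P = taylor (-1) (taylor 1 P) := by rw [taylor_taylor, neg_add_cancel, taylor_zero]
      _ = (X - 1) ^ d * taylor (-1) G := by
        rw [hG, taylor_mul, taylor_pow, taylor_X, C_neg, C_1, ← sub_eq_add_neg]
  have hQ : aeval ω (taylor (-1) G) = 0 := by
    rw [hPG, map_mul, map_pow, map_sub, aeval_X, map_one] at hP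
    exact (mul_eq_zero.1 hP).resolve_left (pow_ne_zero _ (sub_ne_zero.2 (hω.ne_one hp.one_lt)))
  simpa [hG, taylor_eval, coeff_zero_eq_eval_zero, coeff_X_pow_mul'] using
    hω.prime_dvd_eval_one hp hQ

end IsPrimitiveRoot

theorem not_dvd_det_vandermonde {p : ℕ} (hp : p.Prime) {c : Fin m → Fin p}
    (hc : Function.Injective c) :
    ¬ (p : ℤ) ∣ (Matrix.vandermonde fun i => ((c i : ℕ) : ℤ)).det := by
  have := Fact.mk hp
  have hcast : (Matrix.vandermonde fun i => ((c i : ℕ) : ℤ)).map (Int.cast : ℤ → ZMod p) =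
      Matrix.vandermonde fun i => ((c i : ℕ) : ZMod p) := by
    ext i j
    simp [Matrix.vandermonde_apply]
  rw [← ZMod.intCast_zmod_eq_zero_iff_dvd, Int.cast_det, hcast, ← Ne,
    Matrix.det_vandermonde_ne_zero_iff]
  intro i j hij
  rw [ZMod.natCast_eq_natCast_iff', Nat.mod_eq_of_lt (c i).isLt,
    Nat.mod_eq_of_lt (c j).isLt] at hij
  exact hc (Fin.ext hij)

theorem chebotarev {p : ℕ} (hp : p.Prime) (ω : ℂ) (hω : ω ^ p = 1) (hω1 : ω ≠ 1)
    (V : Matrix (Fin p) (Fin p) ℂ) (hV : ∀ i j, V i j = ω ^ (i.val * j.val)) :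
    ∀ (m : ℕ) (f g : Fin m → Fin p), 0 < m → Function.Injective f →
      Function.Injective g → (V.submatrix f g).det ≠ 0 := by
  intro m f g _ hf hg hdet
  have := Fact.mk hp
  have hprim : IsPrimitiveRoot ω p := orderOf_eq_prime hω hω1 ▸ IsPrimitiveRoot.orderOf ω
  have hminor : V.submatrix f g = Matrix.of fun i j => ω ^ ((f i : ℕ) * (g j : ℕ)) := by
    ext i j
    simp [hV]
  rw [hminor, ← aeval_minorPoly] at hdet
  have hcoeff :=
    hprim.prime_dvd_coeff_taylor_one hp (fun _ => coeff_taylor_minorPoly_of_lt _ _) hdet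
  have hvdm := dvd_mul_of_dvd_right hcoeff (∏ i : Fin m, ((i : ℕ).factorial : ℤ))
  rw [prod_factorial_mul_coeff_taylor_minorPoly] at hvdm
  rcases (Nat.prime_iff_prime_int.1 hp).dvd_or_dvd hvdm with h | h
  exacts [not_dvd_det_vandermonde hp hf h, not_dvd_det_vandermonde hp hg h]
end

section
/- Let p be a prime, ω ∈ ℂ a primitive p-th root of unity, and F_p the Fourier matrix (ω^{ij}). Then for any subset of r rows of F_p, the linear code over ℂ spanned by those rows has minimum Hamming distance exactly p − r + 1 (i.e., it is an MDS [p, r, p−r+1] code). -/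
open Polynomial Finset
open scoped Matrix

/-!
Chebotarëv's theorem, after Frenkel: lift a singular `n × n` minor of `(ω ^ (i * j))` to
`ℤ[ζ] = ℤ[X] ⧸ Φ_p` and divide its kernel vector by the largest common power of `ζ - 1`. This
gives a polynomial `∑_{j ∈ C} d_j X^j` with `n` terms, vanishing at `n` distinct powers `ζ ^ i`,
with some `d_j` prime to `ζ - 1`. Modulo `ζ - 1` (residue field `𝔽_p`) all `ζ ^ i` become `1`,
so a nonzero polynomial over `𝔽_p` with `n` terms of distinct exponents below `p` would be
divisible by `(X - 1) ^ n`, which is impossible.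

Since any `r` columns of the chosen `r` rows are independent, a nonzero codeword has fewer than
`r` zeros, hence weight at least `p - r + 1`; the Singleton bound gives a codeword of that weight.
-/
namespace Polynomial

variable {R : Type*} [CommRing R]

theorem X_mul_derivative_C_mul_X_pow (a : R) (n : ℕ) :
    X * derivative (C a * X ^ n) = C (a * n) * X ^ n := by
  rw [derivative_C_mul_X_pow]
  rcases n with _ | n
  · simp
  · rw [Nat.add_sub_cancel, pow_succ]
    ring

variable [IsDomain R]

theorem eq_zero_of_X_sub_one_pow_dvd_sum {ι : Type*} {c : ι → ℕ}
    (hc : Function.Injective fun i => (c i : R)) (s : Finset ι) {e : ι → R}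
    (h : (X - 1 : R[X]) ^ #s ∣ ∑ i ∈ s, C (e i) * X ^ c i) : ∀ i ∈ s, e i = 0 := by
  classical
  induction s using Finset.induction_on generalizing e with
  | empty => simp
  | insert a s ha ih =>
    set f := ∑ i ∈ insert a s, C (e i) * X ^ c i
    -- The Euler operator `X d/dX - c a` kills the `a`-th term and keeps `(X - 1) ^ #s` as divisor.
    have hEuler : X * derivative f - C (c a : R) * f
        = ∑ i ∈ s, C (e i * (c i - c a)) * X ^ c i := calc
      _ = ∑ i ∈ insert a s, C (e i * (c i - c a)) * X ^ c i := by
        simp only [f, derivative_sum, mul_sum, ← sum_sub_distrib, X_mul_derivative_C_mul_X_pow]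
        exact sum_congr rfl fun i _ => by simp only [C_mul, C_sub]; ring
      _ = _ := by rw [sum_insert ha, sub_self, mul_zero, C_0, zero_mul, zero_add]
    have hs : ∀ i ∈ s, e i = 0 := by
      have hdvd : (X - 1 : R[X]) ^ #s ∣ X * derivative f - C (c a : R) * f := by
        rw [card_insert_of_notMem ha] at h
        exact dvd_sub ((pow_sub_one_dvd_derivative_of_pow_dvd h).mul_left X)
          (((pow_dvd_pow _ (Nat.le_succ _)).trans h).mul_left _)
      intro i hi
      have hia : (c i : R) - c a ≠ 0 := sub_ne_zero.mpr (hc.ne (ne_of_mem_of_not_mem hi ha))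
      exact (mul_eq_zero.mp (ih (hEuler ▸ hdvd) i hi)).resolve_right hia
    have hf : f = C (e a) * X ^ c a := by
      simp only [f]
      rw [sum_insert ha, sum_eq_zero fun i hi => by rw [hs i hi, C_0, zero_mul], add_zero]
    have hea : e a = 0 := by
      have : (X - 1 : R[X]) ∣ f :=
        (dvd_pow_self _ (card_ne_zero_of_mem (mem_insert_self a s))).trans h
      rw [hf, ← C_1, dvd_iff_isRoot, IsRoot.def] at this
      simpa using this
    intro i hi
    rcases mem_insert.mp hi with rfl | hi
    exacts [hea, hs i hi]

theorem prod_X_sub_C_dvd_of_isRoot {ι : Type*} (s : Finset ι) {a : ι → R} (ha : Set.InjOn a s)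
    {g : R[X]} (hg : ∀ i ∈ s, g.IsRoot (a i)) : ∏ i ∈ s, (X - C (a i)) ∣ g := by
  rcases eq_or_ne g 0 with rfl | hg0
  · exact dvd_zero _
  have hmap : s.val.map (fun i => X - C (a i)) = (s.val.map a).map (fun x => X - C x) := by
    rw [Multiset.map_map]
    rfl
  rw [prod_eq_multiset_prod, hmap, Multiset.prod_X_sub_C_dvd_iff_le_roots hg0,
    Multiset.le_iff_subset (Multiset.Nodup.map_on ha s.nodup)]
  intro x hx
  obtain ⟨i, hi, rfl⟩ := Multiset.mem_map.mp hx
  exact (mem_roots hg0).mpr (hg i hi)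

end Polynomial

theorem exists_eq_pow_smul_not_dvd {A ι : Type*} [CommMonoidWithZero A] [IsCancelMulZero A]
    [WfDvdMonoid A] {π : A} (hπ : ¬IsUnit π) {d : ι → A} (hd : d ≠ 0) :
    ∃ (m : ℕ) (e : ι → A), d = π ^ m • e ∧ ∃ j, ¬π ∣ e j := by
  classical
  obtain ⟨j₀, hj₀⟩ := Function.ne_iff.mp hd
  have hfin : ∃ n, ¬∀ j, π ^ (n + 1) ∣ d j := by
    obtain ⟨n, hn⟩ := FiniteMultiplicity.of_not_isUnit hπ hj₀
    exact ⟨n, fun h => hn (h j₀)⟩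
  have hdvd : ∀ j, π ^ Nat.find hfin ∣ d j := by
    rcases h : Nat.find hfin with _ | n
    · simp
    · exact not_not.mp (Nat.find_min hfin (h ▸ n.lt_succ_self))
  choose e he using hdvd
  refine ⟨Nat.find hfin, e, funext he, ?_⟩
  obtain ⟨j, hj⟩ := not_forall.mp (Nat.find_spec hfin)
  exact ⟨j, fun ⟨c, hc⟩ => hj ⟨c, by rw [he j, hc, pow_succ, mul_assoc]⟩⟩

theorem Matrix.det_of_pow_mul_ne_zero {A K ι : Type*} [CommRing A] [IsDomain A] [WfDvdMonoid A]
    [CommRing K] [IsDomain K] [Fintype ι] [DecidableEq ι] {η : A} {φ : A →+* K}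
    (hφ : RingHom.ker φ = Ideal.span {η - 1}) {r c : ι → ℕ}
    (hr : Function.Injective fun k => η ^ r k) (hc : Function.Injective fun l => (c l : K)) :
    (Matrix.of fun k l => η ^ (r k * c l)).det ≠ 0 := by
  have hφη : φ η = 1 := by
    have : η - 1 ∈ RingHom.ker φ := hφ ▸ Ideal.mem_span_singleton_self _
    rwa [RingHom.mem_ker, map_sub, map_one, sub_eq_zero] at this
  have hπ : ¬IsUnit (η - 1) := fun hu =>
    RingHom.ker_ne_top φ (by rw [hφ, Ideal.span_singleton_eq_top.mpr hu])
  rw [Ne, ← Matrix.exists_mulVec_eq_zero_iff]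
  rintro ⟨d, hd0, hd⟩
  obtain ⟨m, e, rfl, j, hj⟩ := exists_eq_pow_smul_not_dvd hπ hd0
  have hMe : (Matrix.of fun k l => η ^ (r k * c l)) *ᵥ e = 0 := by
    have hπm : (η - 1) ^ m ≠ 0 := fun h => hd0 (by rw [h, zero_smul])
    rw [Matrix.mulVec_smul] at hd
    exact (smul_eq_zero.mp hd).resolve_left hπm
  have he : ∀ k, (∑ l, C (e l) * X ^ c l).IsRoot (η ^ r k) := by
    intro k
    simp only [IsRoot.def, eval_finsetSum, eval_mul, eval_C, eval_pow, eval_X, ← pow_mul]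
    simpa only [Matrix.mulVec, dotProduct, Matrix.of_apply, mul_comm, Pi.zero_apply]
      using congrFun hMe k
  have hdvd := Polynomial.map_dvd φ (prod_X_sub_C_dvd_of_isRoot univ hr.injOn fun k _ => he k)
  simp only [Polynomial.map_prod, Polynomial.map_sub, Polynomial.map_X, Polynomial.map_C, map_pow,
    hφη, one_pow, C_1, prod_const, Polynomial.map_sum, Polynomial.map_mul,
    Polynomial.map_pow] at hdvd
  have hφe := eq_zero_of_X_sub_one_pow_dvd_sum hc univ hdvd j (mem_univ j)
  exact hj (Ideal.mem_span_singleton.mp (hφ ▸ hφe))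

theorem AdjoinRoot.root_sub_one_dvd_mk_sub_eval {R : Type*} [CommRing R] (g f : R[X]) :
    root g - 1 ∣ mk g f - of g (f.eval 1) := by
  obtain ⟨q, hq⟩ := X_sub_C_dvd_sub_C_eval (p := f) (a := 1)
  exact ⟨mk g q, by simpa using congrArg (mk g) hq⟩

section CyclotomicIntegers

variable {n : ℕ} [NeZero n]

instance : IsDomain (AdjoinRoot (cyclotomic n ℤ)) :=
  AdjoinRoot.isDomain_of_prime (cyclotomic.irreducible (NeZero.pos n)).prime

noncomputable def IsPrimitiveRoot.liftAdjoinRoot {K : Type*} [CommRing K] [IsDomain K] {ω : K}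
    (hω : IsPrimitiveRoot ω n) : AdjoinRoot (cyclotomic n ℤ) →+* K :=
  AdjoinRoot.lift (Int.castRingHom K) ω <| by
    rw [eval₂_eq_eval_map, map_cyclotomic]
    exact hω.isRoot_cyclotomic (NeZero.pos n)

theorem IsPrimitiveRoot.liftAdjoinRoot_root {K : Type*} [CommRing K] [IsDomain K] {ω : K}
    (hω : IsPrimitiveRoot ω n) : hω.liftAdjoinRoot (AdjoinRoot.root _) = ω :=
  AdjoinRoot.lift_root _

theorem IsPrimitiveRoot.injective_liftAdjoinRoot {K : Type*} [Field K] [CharZero K] {ω : K}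
    (hω : IsPrimitiveRoot ω n) : Function.Injective hω.liftAdjoinRoot := by
  rw [injective_iff_map_eq_zero]
  intro a ha
  obtain ⟨f, rfl⟩ := AdjoinRoot.mk_surjective a
  rw [IsPrimitiveRoot.liftAdjoinRoot, AdjoinRoot.lift_mk] at ha
  rw [AdjoinRoot.mk_eq_zero, cyclotomic_eq_minpoly hω (NeZero.pos n)]
  exact minpoly.isIntegrallyClosed_dvd (hω.isIntegral (NeZero.pos n)) ha

end CyclotomicIntegers

section Reduction

variable (p : ℕ) [Fact p.Prime]

noncomputable def cyclotomicReduction : AdjoinRoot (cyclotomic p ℤ) →+* ZMod p :=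
  AdjoinRoot.lift (Int.castRingHom (ZMod p)) 1 <| by
    rw [eval₂_at_one, eval_one_cyclotomic_prime, eq_intCast, Int.cast_natCast, ZMod.natCast_self]

theorem ker_cyclotomicReduction :
    RingHom.ker (cyclotomicReduction p) = Ideal.span {AdjoinRoot.root (cyclotomic p ℤ) - 1} := by
  refine le_antisymm (fun a ha => ?_) ((Ideal.span_singleton_le_iff_mem _).mpr ?_)
  · obtain ⟨f, rfl⟩ := AdjoinRoot.mk_surjective a
    rw [RingHom.mem_ker, cyclotomicReduction, AdjoinRoot.lift_mk, eval₂_at_one, eq_intCast,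
      ZMod.intCast_zmod_eq_zero_iff_dvd] at ha
    obtain ⟨m, hm⟩ := ha
    have hp := AdjoinRoot.root_sub_one_dvd_mk_sub_eval (cyclotomic p ℤ) (cyclotomic p ℤ)
    rw [AdjoinRoot.mk_self, eval_one_cyclotomic_prime, zero_sub, dvd_neg] at hp
    rw [Ideal.mem_span_singleton,
      ← sub_add_cancel (AdjoinRoot.mk _ f) (AdjoinRoot.of _ (f.eval 1))]
    refine dvd_add (AdjoinRoot.root_sub_one_dvd_mk_sub_eval _ f) ?_
    rw [hm, map_mul]
    exact hp.mul_right _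
  · simp [cyclotomicReduction]

end Reduction

theorem IsPrimitiveRoot.det_pow_mul_ne_zero {K : Type*} [Field K] [CharZero K] {p : ℕ}
    [Fact p.Prime] {ω : K} (hω : IsPrimitiveRoot ω p) {ι : Type*} [Fintype ι] [DecidableEq ι]
    {r c : ι → Fin p} (hr : Function.Injective r) (hc : Function.Injective c) :
    (Matrix.of fun k l => ω ^ ((r k : ℕ) * c l)).det ≠ 0 := by
  set η := AdjoinRoot.root (cyclotomic p ℤ)
  have hη : hω.liftAdjoinRoot η = ω := hω.liftAdjoinRoot_root
  have hηr : Function.Injective fun k => η ^ (r k : ℕ) := by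
    intro k k' h
    have := congrArg hω.liftAdjoinRoot h
    simp only [map_pow, hη] at this
    exact hr (Fin.ext (hω.pow_inj (r k).isLt (r k').isLt this))
  have hcast : Function.Injective fun l => ((c l : ℕ) : ZMod p) := by
    intro l l' h
    simp only [ZMod.natCast_eq_natCast_iff', Nat.mod_eq_of_lt (c _).isLt] at h
    exact hc (Fin.ext h)
  have hmap : (Matrix.of fun k l => ω ^ ((r k : ℕ) * c l)) =
      hω.liftAdjoinRoot.mapMatrix (Matrix.of fun k l => η ^ ((r k : ℕ) * c l)) := by
    ext k l
    simp [hη]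
  rw [hmap, ← RingHom.map_det, map_ne_zero_iff _ hω.injective_liftAdjoinRoot]
  exact Matrix.det_of_pow_mul_ne_zero (ker_cyclotomicReduction p) hηr hcast

theorem IsPrimitiveRoot.linearIndependent_pow_mul_restrict {K : Type*} [Field K] [CharZero K]
    {p : ℕ} [Fact p.Prime] {ω : K} (hω : IsPrimitiveRoot ω p) {R C : Finset (Fin p)}
    (hRC : #R ≤ #C) : LinearIndependent K fun (i : R) (j : C) => ω ^ ((i : ℕ) * j) := by
  obtain ⟨e⟩ := Function.Embedding.nonempty_of_card_le
    (by simpa using hRC : Fintype.card R ≤ Fintype.card C)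
  have hdet :=
    hω.det_pow_mul_ne_zero Subtype.val_injective (Subtype.val_injective.comp e.injective)
  exact (Matrix.linearIndependent_rows_of_det_ne_zero hdet).of_comp (LinearMap.funLeft K K e)

section HammingWeight

variable {F ι κ : Type*} [Field F] [DecidableEq F] [Fintype ι] [Fintype κ]

theorem card_sub_card_add_one_le_hammingNorm_of_mem_span {b : κ → ι → F}
    (hb : ∀ C : Finset ι, Fintype.card κ ≤ #C → LinearIndependent F fun k (j : C) => b k j)
    {u : ι → F} (hu : u ∈ Submodule.span F (Set.range b)) (hu0 : u ≠ 0) :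
    Fintype.card ι - Fintype.card κ + 1 ≤ hammingNorm u := by
  obtain ⟨c, rfl⟩ := (Submodule.mem_span_range_iff_exists_fun F).mp hu
  by_contra! hlt
  set Z : Finset ι := {j | ∑ k, c k • b k j = 0}
  have hZ : Fintype.card κ ≤ #Z := by
    have : #Z + hammingNorm (∑ k, c k • b k) = Fintype.card ι := by
      simpa [Z, hammingNorm] using
        card_filter_add_card_filter_not (s := univ) fun j => ∑ k, c k • b k j = 0
    have := hammingNorm_pos_iff.mpr hu0
    omega
  have hc : c = 0 := funext <| Fintype.linearIndependent_iff.mp (hb Z hZ) c <| by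
    ext ⟨j, hj⟩
    simpa [Z] using hj
  simp [hc] at hu0

theorem Submodule.exists_mem_ne_zero_hammingNorm_le (V : Submodule F (ι → F))
    (hV : 0 < Module.finrank F V) :
    ∃ u ∈ V, u ≠ 0 ∧ hammingNorm u ≤ Fintype.card ι - Module.finrank F V + 1 := by
  classical
  have hVι : Module.finrank F V ≤ Fintype.card ι := by
    simpa using Submodule.finrank_le V
  obtain ⟨S, -, hS⟩ := exists_subset_card_eq (s := (univ : Finset ι))
    (n := Module.finrank F V - 1) (by simp; omega)
  set f : V →ₗ[F] (S → F) := LinearMap.funLeft F F Subtype.val ∘ₗ V.subtype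
  have hf : LinearMap.ker f ≠ ⊥ := LinearMap.ker_ne_bot_of_finrank_lt (by simp [hS]; omega)
  obtain ⟨⟨u, huV⟩, hu, hu0⟩ := Submodule.exists_mem_ne_zero_of_ne_bot hf
  refine ⟨u, huV, fun h => hu0 (by simp [h]), ?_⟩
  have hsub : ({j | u j ≠ 0} : Finset ι) ⊆ univ \ S := by
    intro j hj
    simp only [mem_filter, mem_univ, true_and] at hj
    refine mem_sdiff.mpr ⟨mem_univ j, fun hjS => hj ?_⟩
    simpa [f] using congrFun (LinearMap.mem_ker.mp hu) ⟨j, hjS⟩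
  have := card_le_card hsub
  rw [card_sdiff_of_subset (subset_univ S), card_univ, hS] at this
  simp only [hammingNorm]
  omega

def Submodule.IsMinDistance (V : Submodule F (ι → F)) (d : ℕ) : Prop :=
  (∀ u ∈ V, u ≠ 0 → d ≤ hammingNorm u) ∧ ∃ u ∈ V, u ≠ 0 ∧ hammingNorm u = d

theorem Submodule.isMinDistance_span_of_linearIndependent_restrict {b : κ → ι → F}
    (hb : ∀ C : Finset ι, Fintype.card κ ≤ #C → LinearIndependent F fun k (j : C) => b k j)
    (hκ : 0 < Fintype.card κ) (hκι : Fintype.card κ ≤ Fintype.card ι) :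
    (span F (Set.range b)).IsMinDistance (Fintype.card ι - Fintype.card κ + 1) := by
  have hdim : Module.finrank F (span F (Set.range b)) = Fintype.card κ :=
    finrank_span_eq_card <|
      (hb univ (by simpa using hκι)).of_comp (LinearMap.funLeft F F Subtype.val)
  have hlower := fun u (hu : u ∈ span F (Set.range b)) =>
    card_sub_card_add_one_le_hammingNorm_of_mem_span hb hu
  obtain ⟨u, hu, hu0, hle⟩ := exists_mem_ne_zero_hammingNorm_le _ (hdim ▸ hκ)
  rw [hdim] at hle
  exact ⟨hlower, u, hu, hu0, le_antisymm hle (hlower u hu hu0)⟩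

end HammingWeight

theorem fourier_rows_mds {p r : ℕ} (hp : p.Prime) (ω : ℂ) (hω : ω ^ p = 1) (hω1 : ω ≠ 1)
    (F : Matrix (Fin p) (Fin p) ℂ) (hF : ∀ i j, F i j = ω ^ (i.val * j.val))
    (R : Finset (Fin p)) (hR : R.card = r) (hr : 0 < r) :
    (∀ u : Fin p → ℂ, u ∈ Submodule.span ℂ ((fun i => F i) '' (R : Set (Fin p))) →
      u ≠ 0 → p - r + 1 ≤ hammingNorm u) ∧
    (∃ u : Fin p → ℂ, u ∈ Submodule.span ℂ ((fun i => F i) '' (R : Set (Fin p))) ∧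
      u ≠ 0 ∧ hammingNorm u = p - r + 1) := by
  have := Fact.mk hp
  have hprim : IsPrimitiveRoot ω p := orderOf_eq_prime hω hω1 ▸ IsPrimitiveRoot.orderOf ω
  have hcard : Fintype.card R = r := by simp [hR]
  have hb : ∀ C : Finset (Fin p), Fintype.card R ≤ #C →
      LinearIndependent ℂ fun (i : R) (j : C) => F i j := by
    intro C hC
    simp only [hF]
    exact hprim.linearIndependent_pow_mul_restrict (by simpa using hC)
  have hmds := Submodule.isMinDistance_span_of_linearIndependent_restrict hb (by omega)
    (by simpa [hcard, ← hR] using card_le_univ R)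
  rw [hcard, Fintype.card_fin] at hmds
  rw [Set.image_eq_range]
  exact hmds
end
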